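/- The function ψ solves the Ornstein–Uhlenbeck characteristic equation: for every x ∈ ℝ, (1/2)σ² ψ″(x) + θ(μ − x) ψ′(x) = λ ψ(x). -/

import Mathlib

/-! With `M p c = ∫₀^∞ t^p exp(-t²/2 + c t) dt` and `ν = λ/θ`, we have
`ψ(x) = M (ν - 1) (a (x - μ))`. Differentiating under the integral sign gives
`∂_c M p = M (p + 1)`, so `ψ' = a M ν` and `ψ'' = a² M (ν + 1)`. Integrating
`d/dt (t^ν exp(-t²/2 + c t))` over `(0, ∞)` gives the recurrence `M (ν + 1) = ν M (ν - 1) + c M ν`,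
and since `σ² a² = 2θ` the equation is exactly this recurrence multiplied by `θ`. -/

open MeasureTheory Real Set Filter

/-- The (positive multiple of the) strictly increasing fundamental solution `ψ_λ` of the
Ornstein–Uhlenbeck equation `(1/2)σ² f'' + θ(μ - x) f' = λ f`, written as the integral
`ψ(x) = ∫₀^∞ t^(λ/θ - 1) exp(-t²/2 + a t (x - μ)) dt` with `a = √(2θ)/σ`. -/
noncomputable def OUpsi (lam th mu sig : ℝ) (x : ℝ) : ℝ :=
  ∫ t in Set.Ioi (0:ℝ),
    t ^ (lam / th - 1) * Real.exp (-t ^ 2 / 2 + Real.sqrt (2 * th) / sig * t * (x - mu))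

open Topology

noncomputable def tiltedGaussMoment (p c : ℝ) : ℝ :=
  ∫ t in Ioi (0 : ℝ), t ^ p * exp (-t ^ 2 / 2 + c * t)

lemma rpow_mul_exp_neg_sq_div_two_add_mul_le {p t : ℝ} (ht : 0 < t) (c : ℝ) :
    t ^ p * exp (-t ^ 2 / 2 + c * t) ≤ exp (c ^ 2) * (t ^ p * exp (-(1 / 4) * t ^ 2)) := by
  rw [mul_left_comm, ← exp_add]
  refine mul_le_mul_of_nonneg_left (exp_le_exp.mpr ?_) (rpow_nonneg ht.le p)
  nlinarith [sq_nonneg (t / 2 - c)]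

lemma integrableOn_rpow_mul_exp_neg_sq_div_two_add_mul {p : ℝ} (hp : -1 < p) (c : ℝ) :
    IntegrableOn (fun t : ℝ => t ^ p * exp (-t ^ 2 / 2 + c * t)) (Ioi 0) := by
  refine Integrable.mono'
    ((integrableOn_rpow_mul_exp_neg_mul_sq (by norm_num : (0 : ℝ) < 1 / 4) hp).const_mul
      (exp (c ^ 2))) (by fun_prop) ((ae_restrict_iff' measurableSet_Ioi).mpr (ae_of_all _ ?_))
  intro t (ht : 0 < t)
  rw [norm_of_nonneg (by positivity)]
  exact rpow_mul_exp_neg_sq_div_two_add_mul_le ht c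

lemma tendsto_rpow_mul_exp_neg_sq_div_two_add_mul_atTop (p c : ℝ) :
    Tendsto (fun t : ℝ => t ^ p * exp (-t ^ 2 / 2 + c * t)) atTop (𝓝 0) := by
  have hdom : Tendsto (fun t : ℝ => exp (c ^ 2) * (t ^ p * exp (-(1 / 4) * t ^ 2)))
      atTop (𝓝 0) := by
    simpa using
      ((rpow_mul_exp_neg_mul_sq_isLittleO_exp_neg (by norm_num) p).tendsto_zero_of_tendsto
        (tendsto_exp_atBot.comp <| tendsto_id.const_mul_atTop_of_neg (by norm_num))).const_mul
        (exp (c ^ 2))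
  refine squeeze_zero' ?_ ?_ hdom <;> filter_upwards [eventually_gt_atTop 0] with t ht
  · positivity
  · exact rpow_mul_exp_neg_sq_div_two_add_mul_le ht c

theorem hasDerivAt_tiltedGaussMoment {p : ℝ} (hp : -1 < p) (c₀ : ℝ) :
    HasDerivAt (tiltedGaussMoment p) (tiltedGaussMoment (p + 1) c₀) c₀ := by
  have hF' : ∀ t > (0 : ℝ), ∀ c, HasDerivAt (fun c => t ^ p * exp (-t ^ 2 / 2 + c * t))
      (t ^ (p + 1) * exp (-t ^ 2 / 2 + c * t)) c := fun t ht c =>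
    ((((hasDerivAt_mul_const t).const_add (-t ^ 2 / 2)).exp).const_mul (t ^ p)).congr_deriv
      (by rw [rpow_add_one ht.ne']; ring)
  refine (hasDerivAt_integral_of_dominated_loc_of_deriv_le (μ := volume.restrict (Ioi 0))
    (F := fun c t => t ^ p * exp (-t ^ 2 / 2 + c * t))
    (F' := fun c t => t ^ (p + 1) * exp (-t ^ 2 / 2 + c * t))
    (bound := fun t => t ^ (p + 1) * exp (-t ^ 2 / 2 + (c₀ + 1) * t))
    (Metric.ball_mem_nhds c₀ one_pos) (Eventually.of_forall fun c => by fun_prop)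
    (integrableOn_rpow_mul_exp_neg_sq_div_two_add_mul hp c₀) (by fun_prop)
    ((ae_restrict_iff' measurableSet_Ioi).mpr (ae_of_all _ fun t ht c hc => ?_))
    (integrableOn_rpow_mul_exp_neg_sq_div_two_add_mul (by linarith) (c₀ + 1))
    ((ae_restrict_iff' measurableSet_Ioi).mpr (ae_of_all _ fun t ht c _ => hF' t ht c))).2
  have ht : (0 : ℝ) < t := ht
  have hc : c ≤ c₀ + 1 := by
    rw [Metric.mem_ball, dist_eq] at hc
    linarith [le_abs_self (c - c₀)]
  rw [norm_of_nonneg (by positivity)]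
  exact mul_le_mul_of_nonneg_left (exp_le_exp.mpr (by nlinarith)) (by positivity)

theorem tiltedGaussMoment_add_one {p : ℝ} (hp : 0 < p) (c : ℝ) :
    tiltedGaussMoment (p + 1) c
      = p * tiltedGaussMoment (p - 1) c + c * tiltedGaussMoment p c := by
  set g : ℝ → ℝ := fun t => exp (-t ^ 2 / 2 + c * t)
  have hderiv : ∀ t ∈ Ioi (0 : ℝ), HasDerivAt (fun t => t ^ p * g t)
      (p * (t ^ (p - 1) * g t) + c * (t ^ p * g t) - t ^ (p + 1) * g t) t := by
    intro t (ht : 0 < t)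
    have hexponent : HasDerivAt (fun t : ℝ => -t ^ 2 / 2 + c * t) (c - t) t :=
      (((hasDerivAt_pow 2 t).neg.div_const 2).add
        ((hasDerivAt_id t).const_mul c)).congr_deriv (by ring)
    refine ((hasDerivAt_rpow_const (Or.inl ht.ne')).mul hexponent.exp).congr_deriv ?_
    rw [rpow_add_one ht.ne']
    ring
  have hcont : ContinuousWithinAt (fun t : ℝ => t ^ p * g t) (Ici 0) 0 :=
    ((continuousAt_rpow_const 0 p (Or.inr hp.le)).mul (by fun_prop)).continuousWithinAt
  have hint : ∀ q : ℝ, -1 < q → IntegrableOn (fun t => t ^ q * g t) (Ioi 0) :=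
    fun q hq => integrableOn_rpow_mul_exp_neg_sq_div_two_add_mul hq c
  have h₁ : IntegrableOn (fun t => p * (t ^ (p - 1) * g t)) (Ioi 0) :=
    (hint _ (by linarith)).const_mul p
  have h₂ : IntegrableOn (fun t => c * (t ^ p * g t)) (Ioi 0) := (hint _ (by linarith)).const_mul c
  have h₁₂ : IntegrableOn (fun t => p * (t ^ (p - 1) * g t) + c * (t ^ p * g t)) (Ioi 0) :=
    h₁.add h₂
  have h₃ := hint (p + 1) (by linarith)
  have hFTC := integral_Ioi_of_hasDerivAt_of_tendsto hcont hderiv (h₁₂.sub h₃)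
    (tendsto_rpow_mul_exp_neg_sq_div_two_add_mul_atTop p c)
  rw [integral_sub h₁₂ h₃, integral_add h₁ h₂, integral_const_mul, integral_const_mul,
    zero_rpow hp.ne', zero_mul, sub_zero] at hFTC
  unfold tiltedGaussMoment
  linarith

theorem hasDerivAt_tiltedGaussMoment_comp {p : ℝ} (hp : -1 < p) (a μ x : ℝ) :
    HasDerivAt (fun y => tiltedGaussMoment p (a * (y - μ)))
      (a * tiltedGaussMoment (p + 1) (a * (x - μ))) x :=
  ((hasDerivAt_tiltedGaussMoment hp _).comp x
    (((hasDerivAt_id x).sub_const μ).const_mul a)).congr_deriv (by simp [mul_comm])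

theorem OUpsi_eq_tiltedGaussMoment (lam th mu sig : ℝ) :
    OUpsi lam th mu sig
      = fun x => tiltedGaussMoment (lam / th - 1) (√(2 * th) / sig * (x - mu)) := by
  funext x
  simp only [OUpsi, tiltedGaussMoment, mul_right_comm _ _ (x - mu)]

theorem statement4_general (lam th mu sig : ℝ)
    (hlam : 0 < lam) (hth : 0 < th) (hsig : 0 < sig) :
    ∀ x : ℝ,
      1 / 2 * sig ^ 2 * deriv (deriv (OUpsi lam th mu sig)) x
        + th * (mu - x) * deriv (OUpsi lam th mu sig) x
      = lam * OUpsi lam th mu sig x := by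
  intro x
  set a := √(2 * th) / sig
  set ν := lam / th
  have hν : 0 < ν := div_pos hlam hth
  have hψ := OUpsi_eq_tiltedGaussMoment lam th mu sig
  have hψ' : deriv (OUpsi lam th mu sig) = fun y => a * tiltedGaussMoment ν (a * (y - mu)) := by
    funext y
    rw [hψ]
    simpa only [sub_add_cancel] using
      (hasDerivAt_tiltedGaussMoment_comp (by linarith : -1 < ν - 1) a mu y).deriv
  have hψ'' : deriv (deriv (OUpsi lam th mu sig)) x
      = a * (a * tiltedGaussMoment (ν + 1) (a * (x - mu))) := by
    rw [hψ']
    exact ((hasDerivAt_tiltedGaussMoment_comp (by linarith : -1 < ν) a mu x).const_mul a).deriv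
  have ha : sig ^ 2 * a ^ 2 = 2 * th := by
    rw [div_pow, sq_sqrt (by positivity)]
    field_simp
  have hthν : th * ν = lam := mul_div_cancel₀ lam hth.ne'
  rw [hψ'', hψ', hψ, tiltedGaussMoment_add_one hν]
  linear_combination (1 / 2 * (ν * tiltedGaussMoment (ν - 1) (a * (x - mu))
    + a * (x - mu) * tiltedGaussMoment ν (a * (x - mu)))) * ha
    + tiltedGaussMoment (ν - 1) (a * (x - mu)) * hthν

/-- `ψ` solves the Ornstein–Uhlenbeck characteristic equation
`(1/2)σ² ψ''(x) + θ(μ - x) ψ'(x) = λ ψ(x)` for every `x ∈ ℝ`. -/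
theorem statement4 (lam th mu sig : ℝ)
    (hlam : 0 < lam) (hth : 0 < th) (hmu : 0 < mu) (hsig : 0 < sig) :
    ∀ x : ℝ,
      1 / 2 * sig ^ 2 * deriv (deriv (OUpsi lam th mu sig)) x
        + th * (mu - x) * deriv (OUpsi lam th mu sig) x
      = lam * OUpsi lam th mu sig x :=
  statement4_general lam th mu sig hlam hth hsig
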